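/- Let G be a graph on n ≥ 5 vertices such that both G and its complement are connected. Then n + 3 ≤ mvc(G) + mvc(complement of G) ≤ 2n. -/

import Mathlib

/-!
Every colouring of a graph of diameter at most two is an MVC-colouring, so such a graph has
`mvc = n`. If `G` has diameter at least three, pick `u, v` at distance at least three: every other
vertex is non-adjacent in `G` to `u` or to `v`, so `Gᶜ` contains a spanning double star centred at
`u, v`, and giving `u` and `v` the same colour and all other vertices distinct colours shows
`mvc Gᶜ ≥ n - 1`. Finally a connected graph on at least three vertices has `mvc ≥ 3`: colour two
leaves of a spanning tree `1` and `2` and everything else `0`.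

Hence if `G` or `Gᶜ` has diameter at most two the sum is at least `n + 3`, and otherwise it is at
least `2n - 2 ≥ n + 3`. The upper bound holds because no colouring uses more than `n` colours.
-/

open SimpleGraph

/-- A vertex-coloring `c` of `G` is an MVC-coloring if any two vertices are joined by a
path whose internal vertices all have the same color. -/
def IsMVCColoring {V : Type*} (G : SimpleGraph V) (c : V → ℕ) : Prop :=
  ∀ u v : V, ∃ p : G.Walk u v, p.IsPath ∧
    ∀ x ∈ p.support.tail.dropLast, ∀ y ∈ p.support.tail.dropLast, c x = c y

/-- The monochromatic vertex-connection number: the maximum number of colors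
used in an MVC-coloring of `G`. -/
noncomputable def mvc {V : Type*} (G : SimpleGraph V) : ℕ :=
  sSup {k : ℕ | ∃ c : V → ℕ, IsMVCColoring G c ∧ (Set.range c).ncard = k}

namespace SimpleGraph

variable {V : Type*} {G : SimpleGraph V}

def DiamLeTwo (G : SimpleGraph V) : Prop :=
  ∀ u v, u ≠ v → G.Adj u v ∨ ∃ w, G.Adj u w ∧ G.Adj w v

def HasSpanningDoubleStar (G : SimpleGraph V) (u v : V) : Prop :=
  G.Adj u v ∧ ∀ w, w ≠ u → w ≠ v → G.Adj u w ∨ G.Adj v w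

lemma exists_hasSpanningDoubleStar_compl_of_not_diamLeTwo (h : ¬ G.DiamLeTwo) :
    ∃ u v, Gᶜ.HasSpanningDoubleStar u v := by
  simp only [DiamLeTwo, not_forall, not_or, not_exists, not_and] at h
  obtain ⟨u, v, huv, hnadj, hno⟩ := h
  refine ⟨u, v, ⟨huv, hnadj⟩, fun w hwu hwv => ?_⟩
  by_cases huw : G.Adj u w
  · exact Or.inr ⟨Ne.symm hwv, fun hvw => hno w huw hvw.symm⟩
  · exact Or.inl ⟨Ne.symm hwu, huw⟩

lemma Walk.IsPath.ne_of_mem_support_tail_dropLast {u v z : V} {p : G.Walk u v} (hp : p.IsPath)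
    (hz : z ∈ p.support.tail.dropLast) : z ≠ u ∧ z ≠ v := by
  have hnd := hp.support_nodup
  constructor
  · rw [← p.cons_tail_support, List.nodup_cons] at hnd
    rintro rfl
    exact hnd.1 (List.dropLast_subset _ hz)
  · rw [← p.dropLast_support_concat, List.nodup_append] at hnd
    rintro rfl
    rw [← List.tail_dropLast] at hz
    exact hnd.2.2 z (List.tail_subset _ hz) z (List.mem_singleton_self z) rfl

end SimpleGraph

section

variable {V : Type*} {G : SimpleGraph V} {c : V → ℕ}

/-- Shortcutting a walk to a path only removes vertices, so the internal vertices of the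
resulting path lie in `S`. -/
lemma IsMVCColoring.of_walks (S : Set V) (hc : ∀ a ∈ S, ∀ b ∈ S, c a = c b)
    (hW : ∀ x y, ∃ W : G.Walk x y, ∀ z ∈ W.support, z = x ∨ z = y ∨ z ∈ S) :
    IsMVCColoring G c := by
  classical
  intro x y
  obtain ⟨W, hWS⟩ := hW x y
  have hS : ∀ z ∈ W.bypass.support.tail.dropLast, z ∈ S := fun z hz => by
    have hzW : z ∈ W.support :=
      W.support_bypass_subset_support (List.mem_of_mem_tail (List.mem_of_mem_dropLast hz))
    have ⟨hzx, hzy⟩ := W.bypass_isPath.ne_of_mem_support_tail_dropLast hz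
    simpa [hzx, hzy] using hWS z hzW
  exact ⟨W.bypass, W.bypass_isPath, fun a ha b hb => hc a (hS a ha) b (hS b hb)⟩

lemma IsMVCColoring.of_diamLeTwo (h : G.DiamLeTwo) (c : V → ℕ) : IsMVCColoring G c := by
  intro u v
  by_cases huv : u = v
  · subst huv
    exact ⟨.nil, .nil, by simp⟩
  rcases h u v huv with huv' | ⟨w, huw, hwv⟩
  · exact ⟨huv'.toWalk, by simp [huv'.ne], by simp⟩
  · refine ⟨.cons huw (.cons hwv .nil), ?_, by simp⟩
    simp [Walk.isPath_def, huw.ne, hwv.ne, huv]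

lemma IsMVCColoring.of_hasSpanningDoubleStar {u v : V} (h : G.HasSpanningDoubleStar u v)
    (hc : c u = c v) : IsMVCColoring G c := by
  have toCentre : ∀ x, ∃ W : G.Walk x u, ∀ z ∈ W.support, z = x ∨ z = u ∨ z = v := by
    intro x
    by_cases hxu : x = u
    · subst hxu
      exact ⟨.nil, by simp⟩
    by_cases hxu' : G.Adj x u
    · exact ⟨hxu'.toWalk, by simp⟩
    have hvx : G.Adj v x := by
      by_cases hxv : x = v
      · exact absurd (hxv ▸ h.1.symm) hxu'
      · exact (h.2 x hxu hxv).resolve_left fun hux => hxu' hux.symm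
    exact ⟨.cons hvx.symm h.1.symm.toWalk, by simp⟩
  refine .of_walks {u, v} (by simp [hc]) fun x y => ?_
  obtain ⟨Wx, hWx⟩ := toCentre x
  obtain ⟨Wy, hWy⟩ := toCentre y
  refine ⟨Wx.append Wy.reverse, fun z hz => ?_⟩
  rw [Walk.mem_support_append_iff, Walk.support_reverse, List.mem_reverse] at hz
  rcases hz with hz | hz
  · rcases hWx z hz with rfl | rfl | rfl <;> simp
  · rcases hWy z hz with rfl | rfl | rfl <;> simp

/-- A vertex of degree at most one in a spanning tree is never an internal vertex of a tree
path. -/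
lemma IsMVCColoring.of_isTree_le {T : SimpleGraph V} (hT : T.IsTree) (hTG : T ≤ G) {a b : V}
    (ha : (T.neighborSet a).Subsingleton) (hb : (T.neighborSet b).Subsingleton)
    (hc : ∀ x, x ≠ a → x ≠ b → ∀ y, y ≠ a → y ≠ b → c x = c y) : IsMVCColoring G c := by
  refine .of_walks {a, b}ᶜ (by simpa using hc) fun x y => ?_
  obtain ⟨p, hp⟩ := hT.connected.exists_isPath x y
  refine ⟨p.mapLe hTG, fun z hz => ?_⟩
  replace hz : z ∈ p.support := by simpa using hz
  by_contra! hzxy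
  obtain ⟨hzx, hzy, hzab⟩ := hzxy
  simp only [Set.mem_compl_iff, Set.mem_insert_iff, Set.mem_singleton_iff, not_or,
    not_and_or, not_not] at hzab
  rcases hzab with rfl | rfl
  · exact hp.isTrail.not_mem_support_of_subsingleton_neighborSet hzx hzy ha hz
  · exact hp.isTrail.not_mem_support_of_subsingleton_neighborSet hzx hzy hb hz

lemma ncard_range_le_mvc [Finite V] (hc : IsMVCColoring G c) : (Set.range c).ncard ≤ mvc G :=
  le_csSup ⟨Nat.card V, by rintro _ ⟨c', -, rfl⟩; exact Finite.card_range_le c'⟩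
    ⟨c, hc, rfl⟩

lemma mvc_le_card [Fintype V] (G : SimpleGraph V) : mvc G ≤ Fintype.card V :=
  csSup_le' <| by
    rintro _ ⟨c, -, rfl⟩
    exact Nat.card_eq_fintype_card (α := V) ▸ Finite.card_range_le c

lemma card_le_mvc_of_diamLeTwo [Fintype V] (h : G.DiamLeTwo) : Fintype.card V ≤ mvc G := by
  let c : V → ℕ := fun x => Fintype.equivFin V x
  have hc : Function.Injective c := Fin.val_injective.comp (Fintype.equivFin V).injective
  simpa [Set.ncard_range_of_injective hc] using ncard_range_le_mvc (.of_diamLeTwo h c)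

lemma card_sub_one_le_mvc_of_hasSpanningDoubleStar [Fintype V] {u v : V}
    (h : G.HasSpanningDoubleStar u v) : Fintype.card V - 1 ≤ mvc G := by
  classical
  let e : V → ℕ := fun x => Fintype.equivFin V x
  have he : Function.Injective e := Fin.val_injective.comp (Fintype.equivFin V).injective
  let c : V → ℕ := fun x => if x = v then e u else e x
  have hc : IsMVCColoring G c := .of_hasSpanningDoubleStar h (by simp [c])
  calc Fintype.card V - 1 = ({v}ᶜ : Set V).ncard := by
        rw [← Nat.card_eq_fintype_card, ← Set.ncard_compl_add_ncard {v}, Set.ncard_singleton]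
        rfl
    _ = (e '' {v}ᶜ).ncard := (Set.ncard_image_of_injective _ he).symm
    _ ≤ (Set.range c).ncard :=
        Set.ncard_le_ncard fun _ ⟨x, hx, hex⟩ => ⟨x, (if_neg hx).trans hex⟩
    _ ≤ mvc G := ncard_range_le_mvc hc

/-- Two leaves of a spanning tree get their own colours; every other vertex gets colour `0`. -/
lemma three_le_mvc [Fintype V] (hG : G.Connected) (hV : 3 ≤ Fintype.card V) : 3 ≤ mvc G := by
  classical
  have : Nontrivial V := Fintype.one_lt_card_iff_nontrivial.mp (by omega)
  obtain ⟨T, hTG, hT⟩ := hG.exists_isTree_le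
  obtain ⟨a, b, hab, ha, hb⟩ := hT.exists_ne_and_degree_eq_one
  obtain ⟨z, -, hz⟩ := Finset.exists_mem_notMem_of_card_lt_card (s := {a, b})
    (t := Finset.univ) (Finset.card_le_two.trans_lt (by rw [Finset.card_univ]; omega))
  simp only [Finset.mem_insert, Finset.mem_singleton, not_or] at hz
  let c : V → ℕ := fun x => if x = a then 1 else if x = b then 2 else 0
  have hleaf {x : V} (hx : T.degree x = 1) : (T.neighborSet x).Subsingleton :=
    fun _ hy _ hy' => (degree_eq_one_iff_existsUnique_adj.mp hx).unique hy hy'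
  have hc : IsMVCColoring G c := .of_isTree_le hT hTG (hleaf ha) (hleaf hb) <| by
    intro x hxa hxb y hya hyb
    simp [c, hxa, hxb, hya, hyb]
  calc 3 = ({c a, c b, c z} : Set ℕ).ncard := by simp [c, hab.symm, hz.1, hz.2]
    _ ≤ (Set.range c).ncard := by
        refine Set.ncard_le_ncard ?_
        rintro _ (rfl | rfl | rfl) <;> exact ⟨_, rfl⟩
    _ ≤ mvc G := ncard_range_le_mvc hc

end

theorem stmt_15 {V : Type*} [Fintype V] (G : SimpleGraph V)
    (hn : 5 ≤ Fintype.card V) (hG : G.Connected) (hGc : Gᶜ.Connected) :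
    Fintype.card V + 3 ≤ mvc G + mvc Gᶜ ∧ mvc G + mvc Gᶜ ≤ 2 * Fintype.card V := by
  refine ⟨?_, by linarith [mvc_le_card G, mvc_le_card Gᶜ]⟩
  by_cases hG2 : G.DiamLeTwo
  · linarith [card_le_mvc_of_diamLeTwo hG2, three_le_mvc hGc (by omega)]
  by_cases hGc2 : Gᶜ.DiamLeTwo
  · linarith [card_le_mvc_of_diamLeTwo hGc2, three_le_mvc hG (by omega)]
  obtain ⟨u, v, huv⟩ := exists_hasSpanningDoubleStar_compl_of_not_diamLeTwo hG2
  obtain ⟨u', v', huv'⟩ := exists_hasSpanningDoubleStar_compl_of_not_diamLeTwo hGc2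
  rw [compl_compl] at huv'
  have := card_sub_one_le_mvc_of_hasSpanningDoubleStar huv
  have := card_sub_one_le_mvc_of_hasSpanningDoubleStar huv'
  omega
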